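/- For a 1-cocycle u ∈ Z¹(PSL(2,ℤ), N), the following are equivalent: (a) for every a ∈ ℙ¹(ℚ) the restriction of u to the stabilizer Stab(a) of a in PSL(2,ℤ) is trivial, i.e. there exists n ∈ N with u(k) = n⁻¹·(k•n) for all k ∈ Stab(a); (b) there exists n ∈ N with u(σ)·(σ•u(τ)) = n⁻¹·((στ)•n). -/

import Mathlib

/-- A 1-cocycle of `G` in a (possibly noncommutative) group `N` on which `G`
acts on the left by group automorphisms: `u (g₁ * g₂) = u g₁ * g₁ • u g₂`. -/
def IsCocycle {G N : Type*} [Group G] [Group N] [MulDistribMulAction G N]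
    (u : G → N) : Prop :=
  ∀ g₁ g₂ : G, u (g₁ * g₂) = u g₁ * g₁ • u g₂

/-- Two maps `u v : G → N` are cohomologous if there is `n : N` with
`v g = n⁻¹ * u g * g • n` for all `g`. -/
def Cohomologous {G N : Type*} [Group G] [Group N] [MulDistribMulAction G N]
    (u v : G → N) : Prop :=
  ∃ n : N, ∀ g : G, v g = n⁻¹ * u g * g • n

/-- The group `SL(2,ℤ)`. -/
abbrev SL2Z := Matrix.SpecialLinearGroup (Fin 2) ℤ

/-- The group `PSL(2,ℤ)`, the quotient of `SL(2,ℤ)` by its center `{±1}`. -/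
abbrev PSL2Z := SL2Z ⧸ Subgroup.center SL2Z

/-- The image `σ` of the matrix `((0,-1),(1,0))` in `PSL(2,ℤ)`. -/
def pslSigma : PSL2Z :=
  QuotientGroup.mk ⟨!![0, -1; 1, 0], by norm_num [Matrix.det_fin_two_of]⟩

/-- The image `τ` of the matrix `((0,-1),(1,-1))` in `PSL(2,ℤ)`. -/
def pslTau : PSL2Z :=
  QuotientGroup.mk ⟨!![0, -1; 1, -1], by norm_num [Matrix.det_fin_two_of]⟩

/-- The projective line `ℙ¹(ℚ) = ℚ ∪ {∞}`, realized as the projectivization of `ℚ²`. -/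
abbrev P1Q := Projectivization ℚ (Fin 2 → ℚ)

/-- The linear automorphism of `ℚ²` attached to an element of `SL(2,ℤ)`. -/
noncomputable def sl2ToLin : SL2Z →* (Fin 2 → ℚ) ≃ₗ[ℚ] (Fin 2 → ℚ) :=
  (Matrix.SpecialLinearGroup.toLin').comp
    (Matrix.SpecialLinearGroup.map (Int.castRingHom ℚ))

/-- The linear action of `SL(2,ℤ)` on the projective line (which is the Möbius
action in the affine coordinate `z = x/y`). -/
noncomputable instance instSL2ZP1Q : MulAction SL2Z P1Q where
  smul g x := Projectivization.map (sl2ToLin g).toLinearMap (sl2ToLin g).injective x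
  one_smul x := by
    induction x using Projectivization.ind with
    | h v hv =>
      show Projectivization.map _ _ _ = _
      rw [Projectivization.map_mk]
      have h1 : (sl2ToLin 1).toLinearMap v = v := by simp
      exact (Projectivization.mk_eq_mk_iff ℚ _ _ _ hv).2 ⟨1, by simp [h1]⟩
  mul_smul g h x := by
    induction x using Projectivization.ind with
    | h v hv =>
      show Projectivization.map _ _ _ =
        Projectivization.map _ _ (Projectivization.map _ _ _)
      rw [Projectivization.map_mk, Projectivization.map_mk, Projectivization.map_mk]
      have h1 : (sl2ToLin (g * h)).toLinearMap v
          = (sl2ToLin g).toLinearMap ((sl2ToLin h).toLinearMap v) := by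
        simp [map_mul]
      exact (Projectivization.mk_eq_mk_iff ℚ _ _ _ _).2 ⟨1, by simp [h1]⟩

lemma center_smul_triv (z : SL2Z) (hz : z ∈ Subgroup.center SL2Z) (x : P1Q) :
    z • x = x := by
  obtain ⟨r, hr2, hrz⟩ := Matrix.SpecialLinearGroup.mem_center_iff.mp hz
  rw [Fintype.card_fin] at hr2
  have hrr : (r : ℚ) * (r : ℚ) = 1 := by
    have := congrArg (fun t : ℤ => (t : ℚ)) hr2
    push_cast at this
    nlinarith [this]
  induction x using Projectivization.ind with
  | h v hv =>
    show Projectivization.map _ _ _ = _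
    rw [Projectivization.map_mk]
    have hval : (sl2ToLin z).toLinearMap v = (r : ℚ) • v := by
      show (sl2ToLin z) v = _
      have hmat : (z : Matrix (Fin 2) (Fin 2) ℤ) = Matrix.scalar (Fin 2) r := hrz.symm
      simp only [sl2ToLin, MonoidHom.comp_apply,
        Matrix.SpecialLinearGroup.toLin'_apply, Matrix.toLin'_apply,
        Matrix.SpecialLinearGroup.map_apply_coe, hmat]
      rw [Matrix.scalar_apply]
      ext i
      simp [Matrix.mulVec, dotProduct, Matrix.diagonal, RingHom.mapMatrix_apply,
        Fin.sum_univ_two] <;> fin_cases i <;> simp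
    exact (Projectivization.mk_eq_mk_iff ℚ _ _ _ hv).2
      ⟨⟨(r : ℚ), (r : ℚ), hrr, hrr⟩, by rw [Units.smul_def]; exact hval.symm⟩

/-- The Möbius action of `PSL(2,ℤ)` on the projective line `ℙ¹(ℚ)`. -/
noncomputable instance instPSL2ZP1Q : MulAction PSL2Z P1Q where
  smul g x := Quotient.liftOn' g (fun s : SL2Z => s • x)
    (fun a b hab => by
      have h : a⁻¹ * b ∈ Subgroup.center SL2Z := QuotientGroup.leftRel_apply.mp hab
      calc a • x = a • ((a⁻¹ * b) • x) := by rw [center_smul_triv _ h]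
        _ = (a * (a⁻¹ * b)) • x := (mul_smul _ _ _).symm
        _ = b • x := by rw [mul_inv_cancel_left])
  one_smul x := one_smul SL2Z x
  mul_smul g h x := by
    refine QuotientGroup.induction_on g (fun a => QuotientGroup.induction_on h (fun b => ?_))
    show (a * b) • x = a • (b • x)
    exact mul_smul a b x

lemma sl2_apply (s : SL2Z) (v : Fin 2 → ℚ) :
    (sl2ToLin s) v = ((s : Matrix (Fin 2) (Fin 2) ℤ).map (Int.cast : ℤ → ℚ)).mulVec v := by
  simp [sl2ToLin, Matrix.SpecialLinearGroup.toLin'_apply, Matrix.toLin'_apply,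
    Matrix.SpecialLinearGroup.map_apply_coe, RingHom.mapMatrix_apply]

lemma sl2_mulVec_ne (s : SL2Z) (v : Fin 2 → ℚ) (hv : v ≠ 0) :
    ((s : Matrix (Fin 2) (Fin 2) ℤ).map (Int.cast : ℤ → ℚ)).mulVec v ≠ 0 := by
  rw [← sl2_apply]
  intro h
  exact hv (by simpa using (map_eq_zero_iff _ (sl2ToLin s).injective).mp h)

lemma smul_mk_eq (s : SL2Z) (v : Fin 2 → ℚ) (hv : v ≠ 0) :
    (QuotientGroup.mk s : PSL2Z) • (Projectivization.mk ℚ v hv) =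
      Projectivization.mk ℚ (((s : Matrix (Fin 2) (Fin 2) ℤ).map (Int.cast : ℤ → ℚ)).mulVec v)
        (sl2_mulVec_ne s v hv) := by
  have h0 : (QuotientGroup.mk s : PSL2Z) • (Projectivization.mk ℚ v hv) =
      Projectivization.map (sl2ToLin s).toLinearMap (sl2ToLin s).injective
        (Projectivization.mk ℚ v hv) := rfl
  rw [h0, Projectivization.map_mk]
  simp only [LinearEquiv.coe_coe]
  exact Projectivization.mk_eq_mk_iff' ℚ _ _ _ _ |>.2 ⟨1, by rw [one_smul, sl2_apply]⟩

section CocycleAlgebra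
variable {G N : Type*} [Group G] [Group N] [MulDistribMulAction G N]

lemma cocycle_one {u : G → N} (hu : IsCocycle u) : u 1 = 1 := by
  have h := hu 1 1
  rw [one_mul, one_smul] at h
  exact (mul_eq_left.mp h.symm)

lemma cocycle_inv {u : G → N} (hu : IsCocycle u) (g : G) :
    u g⁻¹ = g⁻¹ • (u g)⁻¹ := by
  have h := hu g⁻¹ g
  rw [inv_mul_cancel, cocycle_one hu] at h
  rw [eq_inv_of_mul_eq_one_left h.symm, smul_inv']

lemma cocycle_zpow {u : G → N} (hu : IsCocycle u) {g : G} {n : N}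
    (hg : u g = n⁻¹ * g • n) (m : ℤ) : u (g ^ m) = n⁻¹ * (g ^ m) • n := by
  have hnat : ∀ k : ℕ, u (g ^ k) = n⁻¹ * (g ^ k) • n := by
    intro k
    induction k with
    | zero => simpa using cocycle_one hu
    | succ k ih =>
      rw [pow_succ, hu, ih, hg, smul_mul', smul_inv', mul_assoc, mul_inv_cancel_left,
        smul_smul]
  obtain ⟨k, hk | hk⟩ := Int.eq_nat_or_neg m
  · rw [hk, zpow_natCast, hnat k]
  · rw [hk, _root_.zpow_neg, zpow_natCast, cocycle_inv hu, hnat k, _root_.mul_inv_rev, inv_inv,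
      smul_mul', smul_inv', smul_smul, inv_mul_cancel, one_smul]

lemma cocycle_conj {u : G → N} (hu : IsCocycle u) {g h : G} {n : N}
    (hh : u h = n⁻¹ * h • n) :
    u (g * h * g⁻¹) = ((g • n) * (u g)⁻¹)⁻¹ * (g * h * g⁻¹) • ((g • n) * (u g)⁻¹) := by
  rw [hu (g * h) g⁻¹, hu g h, cocycle_inv hu, hh]
  simp only [smul_mul', smul_inv', smul_smul, _root_.mul_inv_rev, inv_inv, mul_assoc,
    inv_mul_cancel_right, mul_inv_cancel_left, inv_mul_cancel, mul_one]

end CocycleAlgebra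

noncomputable def ptInf : P1Q :=
  Projectivization.mk ℚ ![1, 0] (by
    intro h
    have := congrFun h 0
    simp at this)

def matT (m : ℤ) : SL2Z :=
  ⟨!![1, -m; 0, 1], by norm_num [Matrix.det_fin_two_of]⟩

lemma matT_mul (a b : ℤ) : matT a * matT b = matT (a + b) := by
  apply Subtype.ext
  show (matT a : Matrix (Fin 2) (Fin 2) ℤ) * (matT b) = _
  ext i j
  fin_cases i <;> fin_cases j <;>
    simp [matT, Matrix.mul_apply, Fin.sum_univ_two]

lemma mk_eq_mk_of_neg (a b : SL2Z)
    (h : (b : Matrix (Fin 2) (Fin 2) ℤ) = -(a : Matrix (Fin 2) (Fin 2) ℤ)) :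
    (QuotientGroup.mk a : PSL2Z) = QuotientGroup.mk b := by
  apply (QuotientGroup.eq (s := Subgroup.center SL2Z)).mpr
  apply Matrix.SpecialLinearGroup.mem_center_iff.mpr
  refine ⟨-1, by norm_num, ?_⟩
  rw [Matrix.SpecialLinearGroup.coe_mul, h, Matrix.mul_neg, ← Matrix.SpecialLinearGroup.coe_mul, inv_mul_cancel]
  ext i j
  fin_cases i <;> fin_cases j <;>
    simp [Matrix.scalar_apply, Matrix.SpecialLinearGroup.coe_one]

def matSigma : SL2Z := ⟨!![0, -1; 1, 0], by norm_num [Matrix.det_fin_two_of]⟩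
def matTau : SL2Z := ⟨!![0, -1; 1, -1], by norm_num [Matrix.det_fin_two_of]⟩

lemma pslSigma_eq : pslSigma = QuotientGroup.mk matSigma := rfl
lemma pslTau_eq : pslTau = QuotientGroup.mk matTau := rfl

lemma pslST_eq : pslSigma * pslTau = QuotientGroup.mk (matT 1) := by
  rw [pslSigma_eq, pslTau_eq, ← QuotientGroup.mk_mul]
  apply mk_eq_mk_of_neg
  rw [Matrix.SpecialLinearGroup.coe_mul]
  ext i j
  fin_cases i <;> fin_cases j <;>
    simp [matT, matSigma, matTau, Matrix.mul_apply, Fin.sum_univ_two]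

lemma pslST_zpow (m : ℤ) : (pslSigma * pslTau) ^ m = QuotientGroup.mk (matT m) := by
  rw [pslST_eq]
  induction m using Int.induction_on with
  | zero =>
    rw [zpow_zero]
    have h : matT 0 = 1 := Subtype.ext (by
      ext i j
      fin_cases i <;> fin_cases j <;> simp [matT, Matrix.SpecialLinearGroup.coe_one])
    rw [h]
    rfl
  | succ k ih =>
    rw [zpow_add_one, ih, ← QuotientGroup.mk_mul, matT_mul]
  | pred k ih =>
    rw [zpow_sub_one, ih, ← QuotientGroup.mk_inv, ← QuotientGroup.mk_mul]
    congr 1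
    rw [mul_inv_eq_iff_eq_mul, matT_mul]
    congr 1
    ring

lemma e0_ne : (![1, 0] : Fin 2 → ℚ) ≠ 0 := by
  intro h
  have := congrFun h 0
  simp at this

lemma ptInf_eq : ptInf = Projectivization.mk ℚ ![1, 0] e0_ne := rfl

lemma ST_mem_stab : (pslSigma * pslTau) • ptInf = ptInf := by
  rw [pslST_eq, ptInf_eq, smul_mk_eq]
  refine (Projectivization.mk_eq_mk_iff' ℚ _ _ _ _).2 ⟨1, ?_⟩
  funext i
  fin_cases i <;>
    simp [matT, Matrix.mulVec, dotProduct, Fin.sum_univ_two]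

lemma stab_ptInf {k : PSL2Z} (hk : k • ptInf = ptInf) :
    ∃ m : ℤ, k = (pslSigma * pslTau) ^ m := by
  obtain ⟨s, rfl⟩ := QuotientGroup.mk_surjective k
  rw [ptInf_eq, smul_mk_eq, Projectivization.mk_eq_mk_iff'] at hk
  obtain ⟨c, hc⟩ := hk
  have h10 : (s : Matrix (Fin 2) (Fin 2) ℤ) 1 0 = 0 := by
    have h := congrFun hc 1
    simp [Matrix.mulVec, dotProduct, Fin.sum_univ_two, Matrix.map_apply] at h
    exact_mod_cast h.symm
  have hdet := s.property
  rw [Matrix.det_fin_two, h10, mul_zero, sub_zero] at hdet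
  rcases Int.mul_eq_one_iff_eq_one_or_neg_one.mp hdet with ⟨h00, h11⟩ | ⟨h00, h11⟩
  · refine ⟨-((s : Matrix (Fin 2) (Fin 2) ℤ) 0 1), ?_⟩
    rw [pslST_zpow]
    congr 1
    apply Subtype.ext
    ext i j
    fin_cases i <;> fin_cases j <;> simp [matT, h00, h10, h11]
  · refine ⟨(s : Matrix (Fin 2) (Fin 2) ℤ) 0 1, ?_⟩
    rw [pslST_zpow]
    apply mk_eq_mk_of_neg
    ext i j
    fin_cases i <;> fin_cases j <;> simp [matT, h00, h10, h11]

lemma exists_smul_ptInf (a : P1Q) : ∃ g : PSL2Z, g • ptInf = a := by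
  induction a using Projectivization.ind with
  | h v hv =>
    set p := v 0 with hp
    set q := v 1 with hq
    have hv2 : v = ![p, q] := by funext i; fin_cases i <;> rfl
    set x' : ℤ := p.num * q.den with hx'
    set y' : ℤ := q.num * p.den with hy'
    have hne : ¬(x' = 0 ∧ y' = 0) := by
      rintro ⟨h1, h2⟩
      apply hv
      have hp0 : p = 0 := by
        have := mul_eq_zero.mp h1
        rcases this with h | h
        · exact Rat.num_eq_zero.mp h
        · exact absurd h (by exact_mod_cast q.den_nz)
      have hq0 : q = 0 := by
        have := mul_eq_zero.mp h2
        rcases this with h | h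
        · exact Rat.num_eq_zero.mp h
        · exact absurd h (by exact_mod_cast p.den_nz)
      rw [hv2, hp0, hq0]
      funext i; fin_cases i <;> simp
    set g0 : ℤ := (Int.gcd x' y' : ℤ) with hg0
    have hgpos : 0 < Int.gcd x' y' := by
      rcases Nat.eq_zero_or_pos (Int.gcd x' y') with h | h
      · exact absurd (Int.gcd_eq_zero_iff.mp h) hne
      · exact h
    have hg0ne : g0 ≠ 0 := by
      rw [hg0]
      exact_mod_cast hgpos.ne'
    set x : ℤ := x' / g0 with hx
    set y : ℤ := y' / g0 with hy
    have hxx : g0 * x = x' := Int.mul_ediv_cancel' (Int.gcd_dvd_left x' y')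
    have hyy : g0 * y = y' := Int.mul_ediv_cancel' (Int.gcd_dvd_right x' y')
    have hcop : IsCoprime x y := by
      rw [Int.isCoprime_iff_gcd_eq_one]
      exact Int.gcd_div_gcd_div_gcd hgpos
    obtain ⟨u0, v0, huv⟩ := hcop
    have hdet : Matrix.det !![x, -v0; y, u0] = 1 := by
      rw [Matrix.det_fin_two_of]
      linarith [huv]
    refine ⟨QuotientGroup.mk ⟨!![x, -v0; y, u0], hdet⟩, ?_⟩
    rw [ptInf_eq]
    refine (smul_mk_eq _ _ _).trans ?_
    have hmv : ((((⟨!![x, -v0; y, u0], hdet⟩ : SL2Z) : Matrix (Fin 2) (Fin 2) ℤ)).map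
        (Int.cast : ℤ → ℚ)).mulVec ![1, 0] = ![(x : ℚ), (y : ℚ)] := by
      funext i
      fin_cases i <;> simp [Matrix.mulVec, dotProduct, Fin.sum_univ_two]
    refine (Projectivization.mk_eq_mk_iff' ℚ _ _ _ _).2
      ⟨((p.den * q.den : ℚ)) / (g0 : ℚ), ?_⟩
    rw [hmv, hv2]
    have hpd : ((p.den : ℚ)) ≠ 0 := by exact_mod_cast p.den_nz
    have hqd : ((q.den : ℚ)) ≠ 0 := by exact_mod_cast q.den_nz
    have hpp : p * (p.den : ℚ) = (p.num : ℚ) := by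
      have h := div_mul_cancel₀ (p.num : ℚ) hpd
      rwa [Rat.num_div_den p] at h
    have hqq : q * (q.den : ℚ) = (q.num : ℚ) := by
      have h := div_mul_cancel₀ (q.num : ℚ) hqd
      rwa [Rat.num_div_den q] at h
    have hxQ : (g0 : ℚ) * (x : ℚ) = (p.num : ℚ) * (q.den : ℚ) := by
      have := congrArg (fun t : ℤ => (t : ℚ)) hxx
      push_cast at this
      rw [this, hx']
      push_cast
      ring
    have hyQ : (g0 : ℚ) * (y : ℚ) = (q.num : ℚ) * (p.den : ℚ) := by
      have := congrArg (fun t : ℤ => (t : ℚ)) hyy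
      push_cast at this
      rw [this, hy']
      push_cast
      ring
    funext i
    fin_cases i <;>
      · show _ * _ = _
        field_simp
        simp only [Fin.zero_eta, Fin.mk_one, Matrix.cons_val_zero, Matrix.cons_val_one, Matrix.head_cons]
        nlinarith [hxQ, hyQ, hpp, hqq]

theorem cuspidal_iff_sigma_tau_relation {N : Type*} [Group N]
    [MulDistribMulAction PSL2Z N]
    (u : PSL2Z → N) (hu : IsCocycle u) :
    (∀ a : P1Q, ∃ n : N, ∀ k ∈ MulAction.stabilizer PSL2Z a, u k = n⁻¹ * k • n) ↔
    (∃ n : N, u pslSigma * pslSigma • u pslTau = n⁻¹ * (pslSigma * pslTau) • n) := by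
  constructor
  · intro h
    obtain ⟨n, hn⟩ := h ptInf
    refine ⟨n, ?_⟩
    rw [← hu pslSigma pslTau]
    exact hn _ ST_mem_stab
  · rintro ⟨n, hn⟩ a
    obtain ⟨g, hg⟩ := exists_smul_ptInf a
    refine ⟨(g • n) * (u g)⁻¹, ?_⟩
    intro k hk
    have hka : k • a = a := MulAction.mem_stabilizer_iff.mp hk
    have hst : (g⁻¹ * k * g) • ptInf = ptInf := by
      rw [mul_smul, mul_smul, hg, hka, ← hg, ← mul_smul, inv_mul_cancel, one_smul]
    obtain ⟨m, hm⟩ := stab_ptInf hst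
    have hST : u (pslSigma * pslTau) = n⁻¹ * (pslSigma * pslTau) • n := by
      rw [hu pslSigma pslTau]; exact hn
    have hk2 : k = g * (pslSigma * pslTau) ^ m * g⁻¹ := by
      rw [← hm]; group
    rw [hk2]
    exact cocycle_conj hu (cocycle_zpow hu hST m)
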